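/- arXiv:2401.03830 — 6 statements merged into one kernel-verified Lean document; each statement's English description precedes it below -/
import Mathlib

section
/- Let Ω be a finite index set, w : Ω → ℝ, S ⊆ Ω nonempty, and define L(S) = (∑_{s ∈ S} w s)² / |S|. If w is nonnegative and w q > 0 for some q ∉ S, then L(S ∪ {q}) > L(S) if and only if w q > (√(1/|S| + 1) - 1) · ∑_{s ∈ S} w s. -/
theorem stmt3 {ι : Type*} [Fintype ι] [DecidableEq ι] (w : ι → ℝ) (hw : ∀ i, 0 ≤ w i)
    (S : Finset ι) (hS : S.Nonempty) (q : ι) (hq : q ∉ S) (hwq : 0 < w q) :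
    (∑ s ∈ insert q S, w s)^2 / ((insert q S).card : ℝ)
      > (∑ s ∈ S, w s)^2 / (S.card : ℝ)
    ↔ w q > (Real.sqrt (1 / (S.card : ℝ) + 1) - 1) * ∑ s ∈ S, w s := by
  have hn0 : 0 < (S.card : ℝ) := by exact_mod_cast Finset.card_pos.mpr hS
  have hσ : 0 ≤ ∑ s ∈ S, w s := Finset.sum_nonneg fun i _ => hw i
  set n : ℝ := (S.card : ℝ)
  set σ : ℝ := ∑ s ∈ S, w s
  set x : ℝ := w q
  have hr : 0 ≤ 1 / n + 1 := by positivity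
  have hsqrt : Real.sqrt (1 / n + 1) ^ 2 = 1 / n + 1 := Real.sq_sqrt hr
  have hcard : ((insert q S).card : ℝ) = n + 1 := by
    rw [Finset.card_insert_of_notMem hq]; push_cast; rfl
  have hsum : (∑ s ∈ insert q S, w s) = x + σ := Finset.sum_insert hq
  rw [hcard, hsum]
  have h1 : σ^2 / n < (x + σ)^2 / (n + 1) ↔ σ^2 * (n+1) < (x+σ)^2 * n :=
    div_lt_div_iff₀ hn0 (by linarith)
  have h2 : σ^2 * (n+1) < (x+σ)^2 * n ↔ (Real.sqrt (1/n+1) * σ)^2 < (x+σ)^2 := by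
    rw [mul_pow, hsqrt]
    have hinv : n * (1/n) = 1 := by field_simp
    constructor <;> intro h <;> nlinarith [mul_pos hn0 hn0]
  have hs0 : 0 ≤ Real.sqrt (1/n+1) * σ := mul_nonneg (Real.sqrt_nonneg _) hσ
  have hx0 : 0 ≤ x + σ := by positivity
  have h3 : (Real.sqrt (1/n+1) * σ)^2 < (x+σ)^2 ↔ Real.sqrt (1/n+1) * σ < x + σ := by
    constructor
    · intro h
      nlinarith [sq_nonneg (Real.sqrt (1/n+1) * σ + (x+σ))]
    · intro h
      nlinarith
  constructor
  · intro h
    have := (h3.mp (h2.mp (h1.mp h)))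
    nlinarith
  · intro h
    exact h1.mpr (h2.mpr (h3.mpr (by nlinarith)))
end

section
/- Let Ω be a finite set, w : Ω → ℝ nonnegative, S ⊆ Ω with |S| ≥ 2, q ∈ S, and σ = ∑_{s ∈ S} w s. Then (∑_{s∈S} w s)²/|S| > (∑_{s∈S\{q}} w s)²/(|S|-1) if and only if w q > (1 - √(1 - 1/|S|)) · σ. -/
theorem stmt4 {ι : Type*} [Fintype ι] [DecidableEq ι] (w : ι → ℝ) (hw : ∀ i, 0 ≤ w i)
    (S : Finset ι) (hS : 2 ≤ S.card) (q : ι) (hq : q ∈ S) :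
    (∑ s ∈ S, w s)^2 / (S.card : ℝ)
      > (∑ s ∈ S.erase q, w s)^2 / ((S.card : ℝ) - 1)
    ↔ w q > (1 - Real.sqrt (1 - 1 / (S.card : ℝ))) * ∑ s ∈ S, w s := by
  set n : ℝ := (S.card : ℝ) with hn
  have hn2 : (2:ℝ) ≤ n := by rw [hn]; exact_mod_cast hS
  have hn0 : (0:ℝ) < n := by linarith
  have hn1 : (0:ℝ) < n - 1 := by linarith
  have hsum : ∑ s ∈ S.erase q, w s = (∑ s ∈ S, w s) - w q :=
    Finset.sum_erase_eq_sub hq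
  set σ := ∑ s ∈ S, w s with hσ
  have hσ0 : 0 ≤ σ := Finset.sum_nonneg fun i _ => hw i
  have hσ'0 : 0 ≤ σ - w q := by
    rw [← hsum]; exact Finset.sum_nonneg fun i _ => hw i
  have h1n : (0:ℝ) ≤ 1 - 1 / n := by
    have : 1 / n ≤ 1 / 2 := by
      apply div_le_div_of_nonneg_left <;> linarith
    linarith
  set r := Real.sqrt (1 - 1 / n) with hr
  have hr0 : 0 ≤ r := Real.sqrt_nonneg _
  have hr2 : r ^ 2 = 1 - 1 / n := Real.sq_sqrt h1n
  rw [hsum]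
  constructor
  · intro h
    have h' : (σ - w q)^2 * n < σ^2 * (n - 1) := by
      rw [gt_iff_lt, div_lt_div_iff₀ hn1 hn0] at h
      linarith
    have h2 : (σ - w q)^2 < (σ * r)^2 := by
      have : (σ * r)^2 = σ^2 * (1 - 1/n) := by rw [mul_pow, hr2]
      rw [this]
      have hne : n ≠ 0 := ne_of_gt hn0
      have : σ^2 * (1 - 1/n) * n = σ^2 * (n - 1) := by field_simp
      nlinarith
    have h3 : σ - w q < σ * r := by
      nlinarith [mul_nonneg hσ0 hr0]
    nlinarith
  · intro h
    have h3 : σ - w q < σ * r := by nlinarith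
    have h2 : (σ - w q)^2 < (σ * r)^2 := by nlinarith
    have h' : (σ - w q)^2 * n < σ^2 * (n - 1) := by
      have : (σ * r)^2 = σ^2 * (1 - 1/n) := by rw [mul_pow, hr2]
      rw [this] at h2
      have hne : n ≠ 0 := ne_of_gt hn0
      have heq : σ^2 * (1 - 1/n) * n = σ^2 * (n - 1) := by field_simp
      nlinarith
    rw [gt_iff_lt, div_lt_div_iff₀ hn1 hn0]
    linarith
end

section
/- Let Ω be a finite set, S ⊆ Ω nonempty, δ ∈ (0, 1/2], w : Ω → ℝ, b ∈ ℝ. If L_⊕(w,S) ≤ b < U_⊕(w,S) (with L_⊕, U_⊕ as in the dilation-activation bounds), then b ≥ 0 and w_s > 0 for every s ∈ S. -/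
open Finset

variable {ι : Type*}

/-- Lower dilation-activation bound `L_⊕(w,S)`. -/
noncomputable def Lplus [Fintype ι] [DecidableEq ι] (δ : ℝ) (w : ι → ℝ) (S : Finset ι) : ℝ :=
  (∑ k ∈ Finset.univ \ S, max (w k) 0) + (1/2 - δ) * ∑ k ∈ S, max (w k) 0

/-- Upper dilation-activation bound `U_⊕(w,S)`. -/
noncomputable def Uplus [Fintype ι] (δ : ℝ) (w : ι → ℝ) (S : Finset ι)
    (hS : S.Nonempty) : ℝ :=
  (1/2 + δ) * S.inf' hS w + ∑ k : ι, min (w k) 0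


/-- If the dilation activation inequalities hold, the bias is nonnegative and
all weights inside the structuring element are positive. -/
theorem stmt10 [Fintype ι] [DecidableEq ι] (S : Finset ι) (hS : S.Nonempty)
    (δ : ℝ) (hδ : 0 < δ) (hδ' : δ ≤ 1/2) (w : ι → ℝ) (b : ℝ)
    (hL : Lplus δ w S ≤ b) (hU : b < Uplus δ w S hS) :
    0 ≤ b ∧ ∀ s ∈ S, 0 < w s := by
  have hb : 0 ≤ b := by
    refine le_trans ?_ hL
    unfold Lplus
    have h1 : (0:ℝ) ≤ ∑ k ∈ Finset.univ \ S, max (w k) 0 :=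
      Finset.sum_nonneg fun k _ => le_max_right _ _
    have h2 : (0:ℝ) ≤ ∑ k ∈ S, max (w k) 0 :=
      Finset.sum_nonneg fun k _ => le_max_right _ _
    nlinarith
  refine ⟨hb, fun s hs => ?_⟩
  by_contra h
  push_neg at h
  have hinf : S.inf' hS w ≤ w s := Finset.inf'_le _ hs
  have hsum : (∑ k : ι, min (w k) 0) ≤ 0 :=
    Finset.sum_nonpos fun k _ => min_le_right _ _
  have hU0 : Uplus δ w S hS ≤ 0 := by
    unfold Uplus
    nlinarith
  linarith
end

section
/- Projection preserves positivity: let Ω be finite, ŵ : Ω → ℝ with ŵ_i ≥ 0 for all i, b̂ ∈ ℝ, S ⊆ Ω nonempty, and consider minimizing (1/2)∑_i (w_i − ŵ_i)² + (1/2)(b − b̂)² subject to (w,b) lying in the closure of the dilation-activable set A_⊕(S) (with δ such that the constraints read L_⊕(w,S) ≤ b ≤ U_⊕(w,S)). Then any minimizer (w*, b*) satisfies w*_k ≥ 0 for all k ∈ Ω. -/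
open Finset

variable {ι : Type*}

/-- Projection preserves positivity: if `ŵ ≥ 0`, any minimizer of the squared
distance to `(ŵ, b̂)` over the closed dilation-activable set has nonnegative
weights. -/
theorem stmt15 [Fintype ι] [DecidableEq ι] (δ : ℝ) (hδ : 0 < δ) (hδ' : δ ≤ 1/2)
    (S : Finset ι) (hS : S.Nonempty) (what : ι → ℝ) (hwhat : ∀ i, 0 ≤ what i)
    (bhat : ℝ) (wstar : ι → ℝ) (bstar : ℝ)
    (hmem : Lplus δ wstar S ≤ bstar ∧ bstar ≤ Uplus δ wstar S hS)
    (hopt : ∀ (w : ι → ℝ) (b : ℝ), Lplus δ w S ≤ b → b ≤ Uplus δ w S hS →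
      (1/2) * (∑ i : ι, (wstar i - what i)^2) + (1/2) * (bstar - bhat)^2 ≤
      (1/2) * (∑ i : ι, (w i - what i)^2) + (1/2) * (b - bhat)^2) :
    ∀ k, 0 ≤ wstar k := by
  intro k
  by_contra hk
  push_neg at hk
  set w' : ι → ℝ := fun i => max (wstar i) 0 with hw'
  have hmax : ∀ i, max (w' i) 0 = max (wstar i) 0 := fun i =>
    max_eq_left (le_max_right _ _)
  have hL : Lplus δ w' S = Lplus δ wstar S := by
    simp only [Lplus, hmax]
  have hU : Uplus δ wstar S hS ≤ Uplus δ w' S hS := by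
    unfold Uplus
    have h1 : S.inf' hS wstar ≤ S.inf' hS w' := by
      apply Finset.le_inf'
      intro b hb
      exact le_trans (Finset.inf'_le _ hb) (le_max_left _ _)
    have h2 : (∑ k : ι, min (wstar k) 0) ≤ ∑ k : ι, min (w' k) 0 := by
      apply Finset.sum_le_sum
      intro i _
      exact min_le_min (le_max_left _ _) le_rfl
    have h3 : (0:ℝ) ≤ 1/2 + δ := by linarith
    nlinarith [mul_le_mul_of_nonneg_left h1 h3]
  have hfeas1 : Lplus δ w' S ≤ bstar := hL ▸ hmem.1
  have hfeas2 : bstar ≤ Uplus δ w' S hS := le_trans hmem.2 hU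
  have hle := hopt w' bstar hfeas1 hfeas2
  have hlt : (∑ i : ι, (w' i - what i)^2) < ∑ i : ι, (wstar i - what i)^2 := by
    apply Finset.sum_lt_sum
    · intro i _
      rcases le_or_gt 0 (wstar i) with h | h
      · simp [hw', max_eq_left h]
      · have : w' i = 0 := max_eq_right h.le
        rw [this]
        nlinarith [hwhat i]
    · refine ⟨k, Finset.mem_univ k, ?_⟩
      have : w' k = 0 := max_eq_right hk.le
      rw [this]
      nlinarith [hwhat k]
  linarith
end

section
/- Closest constant-support set is a threshold set: let Ω be finite and w : Ω → ℝ strictly positive on its support and nonnegative everywhere, not identically zero. Among all nonempty S ⊆ Ω, any maximizer S* of L(S) = (∑_{s∈S} w_s)²/|S| satisfies: for all j ∈ S* and q ∈ Ω \ S*, w_j > w_q. Consequently S* = {k ∈ Ω : w_k ≥ min_{j∈S*} w_j}. -/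
open Finset

/-- Closest constant-support set is a threshold set: any maximizer `S*` of
`L(S) = (∑_{s∈S} w s)²/|S|` over nonempty subsets separates the weights strictly,
and is a thresholded set of the weights. -/
theorem stmt16 {ι : Type*} [Fintype ι] [DecidableEq ι] (w : ι → ℝ)
    (hw : ∀ i, 0 ≤ w i) (hwpos : 0 < ∑ i : ι, w i)
    (Sstar : Finset ι) (hSstar : Sstar.Nonempty)
    (hmax : ∀ S : Finset ι, S.Nonempty →
      (∑ s ∈ S, w s)^2 / (S.card : ℝ) ≤ (∑ s ∈ Sstar, w s)^2 / (Sstar.card : ℝ)) :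
    (∀ j ∈ Sstar, ∀ q ∉ Sstar, w q < w j) ∧
    Sstar = Finset.univ.filter (fun k => Sstar.inf' hSstar w ≤ w k) := by
  set σ := ∑ s ∈ Sstar, w s with hσdef
  set n : ℝ := (Sstar.card : ℝ) with hndef
  have hncard : 1 ≤ Sstar.card := card_pos.mpr hSstar
  have hn : 0 < n := by rw [hndef]; exact_mod_cast card_pos.mpr hSstar
  have hn1 : 1 ≤ n := by rw [hndef]; exact_mod_cast hncard
  have hnne : n ≠ 0 := ne_of_gt hn
  have hσ0 : 0 ≤ σ := Finset.sum_nonneg (fun i _ => hw i)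
  have huniv : (Finset.univ : Finset ι).Nonempty := by
    by_contra h
    rw [not_nonempty_iff_eq_empty] at h
    rw [h, Finset.sum_empty] at hwpos
    exact lt_irrefl 0 hwpos
  have hσ : 0 < σ := by
    rcases hσ0.lt_or_eq with h | h
    · exact h
    · exfalso
      have h1 := hmax Finset.univ huniv
      rw [← h] at h1
      have h2 : 0 < (∑ i : ι, w i)^2 / ((Finset.univ : Finset ι).card : ℝ) := by
        have : (0:ℝ) < ((Finset.univ : Finset ι).card : ℝ) := by
          exact_mod_cast card_pos.mpr huniv
        positivity
      simp only [zero_pow, ne_eq, OfNat.ofNat_ne_zero, not_false_eq_true,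
        zero_div] at h1
      linarith
  -- addition bound
  have hB : ∀ q ∉ Sstar, w q ≤ σ * (Real.sqrt (1 + 1/n) - 1) := by
    intro q hq
    have hS : (insert q Sstar).Nonempty := insert_nonempty _ _
    have hsum : ∑ s ∈ insert q Sstar, w s = w q + σ := by
      rw [Finset.sum_insert hq]
    have hcard : ((insert q Sstar).card : ℝ) = n + 1 := by
      rw [Finset.card_insert_of_notMem hq]; push_cast; ring
    have h1 := hmax (insert q Sstar) hS
    rw [hsum, hcard] at h1
    rw [div_le_div_iff₀ (by linarith) hn] at h1
    have h2 : (w q + σ)^2 ≤ σ^2 * (1 + 1/n) := by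
      have he : σ^2 * (1 + 1/n) = σ^2 * (n + 1) / n := by
        field_simp
      rw [he, le_div_iff₀ hn]
      linarith
    have h3 : w q + σ ≤ σ * Real.sqrt (1 + 1/n) := by
      have h4 : w q + σ = Real.sqrt ((w q + σ)^2) := by
        rw [Real.sqrt_sq (by nlinarith [hw q])]
      rw [h4]
      calc Real.sqrt ((w q + σ)^2) ≤ Real.sqrt (σ^2 * (1 + 1/n)) :=
            Real.sqrt_le_sqrt h2
        _ = σ * Real.sqrt (1 + 1/n) := by
            rw [Real.sqrt_mul (by positivity), Real.sqrt_sq hσ.le]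
    have h5 : σ * (Real.sqrt (1 + 1/n) - 1) = σ * Real.sqrt (1 + 1/n) - σ := by
      ring
    linarith
  -- removal bound
  have hA : ∀ j ∈ Sstar, σ * (1 - Real.sqrt (1 - 1/n)) ≤ w j := by
    intro j hj
    have hwj : w j ≤ σ := Finset.single_le_sum (fun i _ => hw i) hj
    rcases eq_or_lt_of_le hncard with hc1 | hc2
    · -- card = 1 : Sstar = {j}, σ = w j
      have hsing : Sstar = {j} := by
        rcases Finset.card_eq_one.mp hc1.symm with ⟨a, ha⟩
        rw [ha] at hj ⊢
        rw [Finset.mem_singleton] at hj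
        rw [hj]
      have hσj : σ = w j := by rw [hσdef, hsing, Finset.sum_singleton]
      have hne : n = 1 := by rw [hndef, ← hc1]; norm_num
      rw [hne]
      have h0 : (1:ℝ) - 1/1 = 0 := by norm_num
      rw [h0, Real.sqrt_zero]
      linarith [hσj.le]
    · -- card ≥ 2
      have hc2' : (2:ℝ) ≤ n := by rw [hndef]; exact_mod_cast hc2
      have hS : (Sstar.erase j).Nonempty := by
        rw [← Finset.card_pos, Finset.card_erase_of_mem hj]
        omega
      have hsum : ∑ s ∈ Sstar.erase j, w s = σ - w j := by
        rw [Finset.sum_erase_eq_sub hj]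
      have hcard : ((Sstar.erase j).card : ℝ) = n - 1 := by
        rw [Finset.card_erase_of_mem hj]
        rw [hndef]
        push_cast [Nat.cast_sub hncard]
        ring
      have h1 := hmax (Sstar.erase j) hS
      rw [hsum, hcard] at h1
      rw [div_le_div_iff₀ (by linarith) hn] at h1
      have h2 : (σ - w j)^2 ≤ σ^2 * (1 - 1/n) := by
        have he : σ^2 * (1 - 1/n) = σ^2 * (n - 1) / n := by
          field_simp
        rw [he, le_div_iff₀ hn]
        linarith
      have h3 : σ - w j ≤ σ * Real.sqrt (1 - 1/n) := by
        have h4 : σ - w j = Real.sqrt ((σ - w j)^2) := by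
          rw [Real.sqrt_sq (by linarith)]
        rw [h4]
        calc Real.sqrt ((σ - w j)^2) ≤ Real.sqrt (σ^2 * (1 - 1/n)) :=
              Real.sqrt_le_sqrt h2
          _ = σ * Real.sqrt (1 - 1/n) := by
              rw [Real.sqrt_mul (by positivity), Real.sqrt_sq hσ.le]
      have h5 : σ * (1 - Real.sqrt (1 - 1/n)) = σ - σ * Real.sqrt (1 - 1/n) := by
        ring
      linarith
  -- the key strict gap
  have hC : σ * (Real.sqrt (1 + 1/n) - 1) < σ * (1 - Real.sqrt (1 - 1/n)) := by
    have hx0 : 0 < 1/n := by positivity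
    have hx1 : 1/n ≤ 1 := by rw [div_le_one hn]; exact hn1
    set a := Real.sqrt (1 + 1/n) with hadef
    set b := Real.sqrt (1 - 1/n) with hbdef
    have ha0 : 0 ≤ a := Real.sqrt_nonneg _
    have hb0 : 0 ≤ b := Real.sqrt_nonneg _
    have ha2 : a^2 = 1 + 1/n := Real.sq_sqrt (by linarith)
    have hb2 : b^2 = 1 - 1/n := Real.sq_sqrt (by linarith)
    have hab : a * b = Real.sqrt ((1 + 1/n) * (1 - 1/n)) := by
      rw [hadef, hbdef, ← Real.sqrt_mul (by linarith)]
    have hablt : a * b < 1 := by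
      rw [hab]
      have hlt : (1 + 1/n) * (1 - 1/n) < 1 := by nlinarith
      have hge : 0 ≤ (1 + 1/n) * (1 - 1/n) := by nlinarith
      calc Real.sqrt ((1 + 1/n) * (1 - 1/n)) < Real.sqrt 1 :=
            Real.sqrt_lt_sqrt hge hlt
        _ = 1 := Real.sqrt_one
    have hsum : a + b < 2 := by nlinarith [ha2, hb2, hablt, ha0, hb0]
    have h := mul_lt_mul_of_pos_left hsum hσ
    nlinarith [h]
  have hmain : ∀ j ∈ Sstar, ∀ q ∉ Sstar, w q < w j := by
    intro j hj q hq
    calc w q ≤ σ * (Real.sqrt (1 + 1/n) - 1) := hB q hq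
      _ < σ * (1 - Real.sqrt (1 - 1/n)) := hC
      _ ≤ w j := hA j hj
  refine ⟨hmain, ?_⟩
  ext k
  simp only [Finset.mem_filter, Finset.mem_univ, true_and]
  constructor
  · intro hk
    exact Finset.inf'_le w hk
  · intro hk
    by_contra hknot
    obtain ⟨j, hj, hjeq⟩ := Finset.exists_mem_eq_inf' hSstar w
    have := hmain j hj k hknot
    rw [hjeq] at hk
    linarith
end

section
/- Bias upper bound under erosion activation: let Ω be finite, S ⊆ Ω nonempty with ((3/2 − δ)/(1/2 + δ))·|S| ≥ 3, δ ∈ (0,1/2], and suppose (w, b) satisfies the erosion activation inequalities L_⊖(w,S) ≤ b < U_⊖(w,S). Then b ≥ (1/2)·∑_{k∈Ω} w_k. -/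
open Finset

variable {ι : Type*}

/-- Bias lower bound under erosion activation: if
`(3/2 − δ)/(1/2 + δ) · |S| ≥ 3` and `(w, b)` satisfies the erosion activation
inequalities, then `b ≥ (1/2) ∑ w`. -/
theorem stmt17 [Fintype ι] [DecidableEq ι] (δ : ℝ) (hδ : 0 < δ) (hδ' : δ ≤ 1/2)
    (S : Finset ι) (hS : S.Nonempty)
    (hcard : 3 ≤ ((3/2 - δ) / (1/2 + δ)) * (S.card : ℝ))
    (w : ι → ℝ) (b : ℝ)
    (hL : (∑ k : ι, w k) - Uplus δ w S hS ≤ b)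
    (hU : b < (∑ k : ι, w k) - Lplus δ w S) :
    (1/2) * ∑ k : ι, w k ≤ b := by
  have hsum : (∑ k : ι, w k) = (∑ k : ι, max (w k) 0) + ∑ k : ι, min (w k) 0 := by
    rw [← Finset.sum_add_distrib]
    exact Finset.sum_congr rfl fun k _ => by rw [max_add_min, add_zero]
  have hmaxpos : 0 ≤ ∑ k : ι, max (w k) 0 :=
    Finset.sum_nonneg fun k _ => le_max_right _ _
  have hminneg : ∑ k : ι, min (w k) 0 ≤ 0 :=
    Finset.sum_nonpos fun k _ => min_le_right _ _
  have hcast : (0:ℝ) ≤ (S.card : ℝ) := Nat.cast_nonneg _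
  have hn : (1 + 2*δ) ≤ (S.card : ℝ) := by
    have h1 : (0:ℝ) < 1/2 + δ := by linarith
    have h2 : 3*(1/2+δ) ≤ (3/2 - δ) * S.card := by
      rw [div_mul_eq_mul_div, le_div_iff₀ h1] at hcard
      linarith
    nlinarith [mul_nonneg hδ.le hcast]
  have hU' : Uplus δ w S hS ≤ (1/2) * ∑ k : ι, w k := by
    unfold Uplus
    set m := S.inf' hS w with hm
    rcases le_or_gt m 0 with h | h
    · rw [hsum]; nlinarith
    · have hsub : (S.card : ℝ) * m ≤ ∑ k : ι, max (w k) 0 := by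
        calc (S.card : ℝ) * m = ∑ _k ∈ S, m := by rw [Finset.sum_const, nsmul_eq_mul]
        _ ≤ ∑ k ∈ S, max (w k) 0 := Finset.sum_le_sum fun k hk =>
              le_max_of_le_left (Finset.inf'_le w hk)
        _ ≤ ∑ k : ι, max (w k) 0 := Finset.sum_le_sum_of_subset_of_nonneg
              (Finset.subset_univ S) fun k _ _ => le_max_right _ _
      rw [hsum]
      nlinarith [mul_nonneg (sub_nonneg.mpr hn) h.le]
  linarith
end
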